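/- arXiv:2108.03610 — 5 statements merged into one kernel-verified Lean document; each statement's English description precedes it below -/
import Mathlib

section
/- Let f₀, f₁, g₀, g₁ be paths in a topological space X such that f₀ is homotopically close to g₀ rel ∂I, f₁ is homotopically close to g₁ rel ∂I, and f₀(1) = f₁(0) = g₀(1) = g₁(0). Then the concatenation f₀ * f₁ is homotopically close to g₀ * g₁ rel ∂I. Moreover, the reverse path f₀⁻¹ is homotopically close to g₀⁻¹ rel ∂I. -/
open unitInterval

noncomputable section

attribute [local instance] Path.Homotopic.setoid

variable {X Y : Type*} [TopologicalSpace X] [TopologicalSpace Y]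

/-- `HClose f g` : the path `f` is homotopically close to the path `g` rel `∂I`:
for every partition `0 = t₀ < t₁ < ⋯ < tₙ = 1` and every sequence of open sets
`U₁, …, Uₙ` with `g [tᵢ₋₁, tᵢ] ⊆ Uᵢ`, there is a path `γ`, homotopic to `f` rel `∂I`,
with `γ [tᵢ₋₁, tᵢ] ⊆ Uᵢ` and `γ tᵢ = g tᵢ` for all `i`. -/
def HClose {a b : X} (f g : Path a b) : Prop :=
  ∀ (n : ℕ) (t : Fin (n + 1) → I), t 0 = 0 → t (Fin.last n) = 1 → StrictMono t →
    ∀ U : Fin n → Set X, (∀ i, IsOpen (U i)) →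
      (∀ i : Fin n, g '' Set.Icc (t i.castSucc) (t i.succ) ⊆ U i) →
      ∃ γ : Path a b,
        (∀ i : Fin n, γ '' Set.Icc (t i.castSucc) (t i.succ) ⊆ U i) ∧
        (∀ i : Fin (n + 1), γ (t i) = g (t i)) ∧ γ.Homotopic f

/-- The class of a loop at `x` as an element of the fundamental group. -/
def pathClass {x : X} (f : Path x x) : FundamentalGroup X x :=
  FundamentalGroup.fromPath ⟦f⟧

/-- The `H`-quasi-small loop set `π_H^qs(X, x)`. -/
def qsSet (x : X) (H : Set (FundamentalGroup X x)) : Set (FundamentalGroup X x) :=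
  { p | ∃ f h : Path x x, pathClass f = p ∧ pathClass h ∈ H ∧ HClose f h }

/-- The quasi-small loop group `π₁^qs(X, x)`. -/
def qs (x : X) : Set (FundamentalGroup X x) :=
  qsSet x (⊥ : Subgroup (FundamentalGroup X x))

/-- The Spanier group of `(X, x)` with respect to the cover `𝒰`. -/
def spanierCover (x : X) (𝒰 : Set (Set X)) : Subgroup (FundamentalGroup X x) :=
  Subgroup.closure { p | ∃ (y : X) (u : Path x y) (v : Path y y) (U : Set X),
    U ∈ 𝒰 ∧ Set.range v ⊆ U ∧ p = pathClass ((u.trans v).trans u.symm) }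

/-- The (unbased) Spanier group `π₁^sp(X, x)`. -/
def spanierGroup (x : X) : Subgroup (FundamentalGroup X x) :=
  ⨅ (𝒰 : Set (Set X)) (_ : ∀ U ∈ 𝒰, IsOpen U) (_ : ⋃₀ 𝒰 = Set.univ), spanierCover x 𝒰

/-- The small generated subgroup `π₁^sg(X, x)`. -/
def smallGenerated (x : X) : Subgroup (FundamentalGroup X x) :=
  Subgroup.closure { p | ∃ (y : X) (β : Path x y) (α : Path y y),
    HClose α (Path.refl y) ∧ p = pathClass ((β.trans α).trans β.symm) }

/-- `X` is homotopically path Hausdorff relative to `H ⊆ π₁(X, x)`. -/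
def HPHausdorffRel (x : X) (H : Set (FundamentalGroup X x)) : Prop :=
  ∀ (y : X) (α β : Path x y), pathClass (α.trans β.symm) ∉ H →
    ∃ (n : ℕ) (t : Fin (n + 1) → I), t 0 = 0 ∧ t (Fin.last n) = 1 ∧ StrictMono t ∧
      ∃ U : Fin n → Set X, (∀ i, IsOpen (U i)) ∧
        (∀ i : Fin n, α '' Set.Icc (t i.castSucc) (t i.succ) ⊆ U i) ∧
        ∀ γ : Path x y, (∀ i : Fin n, γ '' Set.Icc (t i.castSucc) (t i.succ) ⊆ U i) →
          (∀ i : Fin (n + 1), γ (t i) = α (t i)) → pathClass (γ.trans β.symm) ∉ H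

/-! Pulling a partition for `g₀.trans g₁` back along the two halves `t ↦ 2t` and `t ↦ 2t - 1`
(clamped to `I`) gives partitions for `g₀` and `g₁`, where the pieces lying in the other half get
the open set `univ`. These pulled-back sequences repeat points, which is harmless: the condition in
`HClose` for an arbitrary sequence follows from the one for the sorted list of its values. For the
reverse path, reverse the partition. -/

theorem Fin.exists_castSucc_le_lt_succ {α : Type*} [LinearOrder α] :
    ∀ {p : ℕ} (s : Fin (p + 1) → α) {x : α}, s 0 ≤ x → x < s (Fin.last p) →
      ∃ j : Fin p, s j.castSucc ≤ x ∧ x < s j.succ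
  | 0, _, _, h0, hx => absurd hx (not_lt.mpr h0)
  | p + 1, s, x, h0, hx => by
    by_cases hxp : x < s (Fin.last p).castSucc
    · obtain ⟨j, hj⟩ := exists_castSucc_le_lt_succ (fun i => s i.castSucc) h0 hxp
      exact ⟨j.castSucc, hj⟩
    · exact ⟨Fin.last p, not_lt.mp hxp, hx⟩

namespace unitInterval

def rescaleLeft (t : I) : I := Set.projIcc 0 1 zero_le_one (2 * (t : ℝ))

def rescaleRight (t : I) : I := Set.projIcc 0 1 zero_le_one (2 * (t : ℝ) - 1)

lemma coe_rescaleLeft (t : I) : (rescaleLeft t : ℝ) = min (2 * (t : ℝ)) 1 := by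
  rw [rescaleLeft, Set.coe_projIcc, min_comm,
    max_eq_right (le_min (by linarith [t.2.1]) zero_le_one)]

lemma coe_rescaleRight (t : I) : (rescaleRight t : ℝ) = max (2 * (t : ℝ) - 1) 0 := by
  rw [rescaleRight, Set.coe_projIcc, min_eq_right (by linarith [t.2.2]), max_comm]

@[simp] lemma rescaleLeft_zero : rescaleLeft 0 = 0 := Subtype.ext (by simp [coe_rescaleLeft])

@[simp] lemma rescaleLeft_one : rescaleLeft 1 = 1 := Subtype.ext (by norm_num [coe_rescaleLeft])

@[simp] lemma rescaleRight_zero : rescaleRight 0 = 0 := Subtype.ext (by simp [coe_rescaleRight])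

@[simp] lemma rescaleRight_one : rescaleRight 1 = 1 := Subtype.ext (by norm_num [coe_rescaleRight])

lemma monotone_rescaleLeft : Monotone rescaleLeft := fun _ _ hst =>
  Set.monotone_projIcc _ (mul_le_mul_of_nonneg_left (Subtype.coe_le_coe.mpr hst) zero_le_two)

lemma monotone_rescaleRight : Monotone rescaleRight := fun _ _ hst =>
  Set.monotone_projIcc _
    (sub_le_sub_right (mul_le_mul_of_nonneg_left (Subtype.coe_le_coe.mpr hst) zero_le_two) 1)

lemma exists_mem_Icc_rescaleLeft_eq {s t u : I} (hs : (s : ℝ) ≤ 1 / 2)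
    (hu : u ∈ Set.Icc (rescaleLeft s) (rescaleLeft t)) :
    ∃ v ∈ Set.Icc s t, (v : ℝ) ≤ 1 / 2 ∧ rescaleLeft v = u := by
  have h₁ : (rescaleLeft s : ℝ) ≤ u := hu.1
  have h₂ : (u : ℝ) ≤ rescaleLeft t := hu.2
  rw [coe_rescaleLeft, min_eq_left (by linarith)] at h₁
  rw [coe_rescaleLeft] at h₂
  have hu1 := u.2.2
  refine ⟨⟨u / 2, by constructor <;> linarith [u.2.1]⟩, ⟨?_, ?_⟩, by simp only; linarith, ?_⟩
  · show (s : ℝ) ≤ u / 2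
    linarith
  · show (u : ℝ) / 2 ≤ t
    linarith [min_le_left (2 * (t : ℝ)) 1]
  · exact Subtype.ext (by rw [coe_rescaleLeft]; simp only; rw [min_eq_left (by linarith)]; ring)

lemma exists_mem_Icc_rescaleRight_eq {s t u : I} (ht : 1 / 2 ≤ (t : ℝ))
    (hu : u ∈ Set.Icc (rescaleRight s) (rescaleRight t)) :
    ∃ v ∈ Set.Icc s t, 1 / 2 ≤ (v : ℝ) ∧ rescaleRight v = u := by
  have h₁ : (rescaleRight s : ℝ) ≤ u := hu.1
  have h₂ : (u : ℝ) ≤ rescaleRight t := hu.2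
  rw [coe_rescaleRight] at h₁
  rw [coe_rescaleRight, max_eq_left (by linarith)] at h₂
  have hu0 := u.2.1
  refine ⟨⟨(u + 1) / 2, by constructor <;> linarith [u.2.2]⟩, ⟨?_, ?_⟩, by simp only; linarith,
    ?_⟩
  · show (s : ℝ) ≤ (u + 1) / 2
    linarith [le_max_left (2 * (s : ℝ) - 1) 0]
  · show ((u : ℝ) + 1) / 2 ≤ t
    linarith
  · exact Subtype.ext (by rw [coe_rescaleRight]; simp only; rw [max_eq_left (by linarith)]; ring)

lemma symm_image_Icc (s t : I) : σ '' Set.Icc s t = Set.Icc (σ t) (σ s) := by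
  ext u
  rw [symm_involutive.image_eq_preimage_symm, Set.mem_preimage, Set.mem_Icc, Set.mem_Icc,
    ← symm_le_symm, symm_symm, ← symm_le_symm (i := t), symm_symm, and_comm]

end unitInterval

namespace Path

variable {x y z : X}

lemma trans_apply_of_le_half (γ : Path x y) (γ' : Path y z) {t : I} (ht : (t : ℝ) ≤ 1 / 2) :
    γ.trans γ' t = γ (rescaleLeft t) := by
  show (if _ then _ else _) = _
  rw [if_pos ht]
  rfl

lemma trans_apply_of_half_le (γ : Path x y) (γ' : Path y z) {t : I} (ht : 1 / 2 ≤ (t : ℝ)) :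
    γ.trans γ' t = γ' (rescaleRight t) := by
  rcases ht.lt_or_eq with ht | ht
  · show (if _ then _ else _) = _
    rw [if_neg (not_le.mpr ht)]
    rfl
  · have hl : rescaleLeft t = 1 := Subtype.ext (by rw [coe_rescaleLeft, ← ht]; norm_num)
    have hr : rescaleRight t = 0 := Subtype.ext (by rw [coe_rescaleRight, ← ht]; norm_num)
    rw [trans_apply_of_le_half _ _ ht.ge, hl, hr, γ.target, γ'.source]

lemma image_Icc_rescaleLeft_subset (γ : Path x y) (γ' : Path y z) {s t : I}
    (hs : (s : ℝ) ≤ 1 / 2) :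
    γ '' Set.Icc (rescaleLeft s) (rescaleLeft t) ⊆ γ.trans γ' '' Set.Icc s t := by
  rintro _ ⟨u, hu, rfl⟩
  obtain ⟨v, hv, hv2, rfl⟩ := exists_mem_Icc_rescaleLeft_eq hs hu
  exact ⟨v, hv, trans_apply_of_le_half γ γ' hv2⟩

lemma image_Icc_rescaleRight_subset (γ : Path x y) (γ' : Path y z) {s t : I}
    (ht : 1 / 2 ≤ (t : ℝ)) :
    γ' '' Set.Icc (rescaleRight s) (rescaleRight t) ⊆ γ.trans γ' '' Set.Icc s t := by
  rintro _ ⟨u, hu, rfl⟩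
  obtain ⟨v, hv, hv2, rfl⟩ := exists_mem_Icc_rescaleRight_eq ht hu
  exact ⟨v, hv, trans_apply_of_half_le γ γ' hv2⟩

lemma trans_image_Icc_subset {γ : Path x y} {γ' : Path y z} {s t : I} {U : Set X}
    (h : (s : ℝ) ≤ 1 / 2 → γ '' Set.Icc (rescaleLeft s) (rescaleLeft t) ⊆ U)
    (h' : 1 / 2 ≤ (t : ℝ) → γ' '' Set.Icc (rescaleRight s) (rescaleRight t) ⊆ U) :
    γ.trans γ' '' Set.Icc s t ⊆ U := by
  rintro _ ⟨u, hu, rfl⟩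
  rcases le_total (u : ℝ) (1 / 2) with hu2 | hu2
  · rw [trans_apply_of_le_half γ γ' hu2]
    exact h (le_trans hu.1 hu2)
      ⟨rescaleLeft u, ⟨monotone_rescaleLeft hu.1, monotone_rescaleLeft hu.2⟩, rfl⟩
  · rw [trans_apply_of_half_le γ γ' hu2]
    exact h' (le_trans hu2 hu.2)
      ⟨rescaleRight u, ⟨monotone_rescaleRight hu.1, monotone_rescaleRight hu.2⟩, rfl⟩

lemma symm_image_Icc (γ : Path x y) (s t : I) :
    γ.symm '' Set.Icc s t = γ '' Set.Icc (σ t) (σ s) := by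
  rw [← unitInterval.symm_image_Icc, Set.image_image]
  rfl

end Path

namespace HClose

variable {a b c : X}

theorem exists_of_partition {f g : Path a b} (h : HClose f g) {n : ℕ} {t : Fin (n + 1) → I}
    (ht0 : t 0 = 0) (ht1 : t (Fin.last n) = 1) {U : Fin n → Set X}
    (hU : ∀ i, IsOpen (U i)) (hgU : ∀ i : Fin n, g '' Set.Icc (t i.castSucc) (t i.succ) ⊆ U i) :
    ∃ γ : Path a b, (∀ i : Fin n, γ '' Set.Icc (t i.castSucc) (t i.succ) ⊆ U i) ∧
      (∀ i, γ (t i) = g (t i)) ∧ γ.Homotopic f := by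
  classical
  set S := Finset.univ.image t
  have htS : ∀ i, t i ∈ S := fun i => Finset.mem_image_of_mem t (Finset.mem_univ i)
  obtain ⟨p, hp⟩ : ∃ p, S.card = p + 1 :=
    Nat.exists_eq_add_one.mpr (Finset.card_pos.mpr (Finset.univ_nonempty.image t))
  set s := S.orderEmbOfFin hp
  have hS : ∀ {x}, x ∈ S → ∃ j, s j = x := fun hx =>
    (Set.ext_iff.mp (S.range_orderEmbOfFin hp) _).mpr hx
  have hs0 : s 0 = 0 := by
    obtain ⟨j, hj⟩ := hS (ht0 ▸ htS 0)
    exact le_antisymm (hj ▸ s.monotone (Fin.zero_le j)) nonneg'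
  have hs1 : s (Fin.last p) = 1 := by
    obtain ⟨j, hj⟩ := hS (ht1 ▸ htS (Fin.last n))
    exact le_antisymm le_one' (hj ▸ s.monotone (Fin.le_last j))
  -- `s` lists the values of `t` in increasing order; each piece of `s` gets the intersection
  -- of the `U i` whose piece contains it
  set V : Fin p → Set X := fun j =>
    ⋂ (i) (_ : Set.Icc (s j.castSucc) (s j.succ) ⊆ Set.Icc (t i.castSucc) (t i.succ)), U i
  obtain ⟨γ, hγV, hγg, hγf⟩ := h p s hs0 hs1 s.strictMono V
    (fun j => isOpen_iInter_of_finite fun i => isOpen_iInter_of_finite fun _ => hU i)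
    (fun j => Set.subset_iInter₂ fun i hi => (Set.image_mono hi).trans (hgU i))
  have hγS : ∀ x ∈ S, γ x = g x := fun x hx => by
    obtain ⟨j, rfl⟩ := hS hx
    exact hγg j
  refine ⟨γ, fun i => ?_, fun i => hγS _ (htS i), hγf⟩
  rintro _ ⟨x, hx, rfl⟩
  by_cases hxS : x ∈ S
  · rw [hγS x hxS]
    exact hgU i ⟨x, hx, rfl⟩
  have hx1 : x < s (Fin.last p) :=
    hs1 ▸ lt_of_le_of_ne le_one' fun h => hxS (h ▸ ht1 ▸ htS (Fin.last n))
  obtain ⟨j, hjx, hxj⟩ := Fin.exists_castSucc_le_lt_succ s (hs0 ▸ nonneg') hx1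
  have hjx' : s j.castSucc < x :=
    lt_of_le_of_ne hjx fun h => hxS (h ▸ S.orderEmbOfFin_mem hp _)
  refine Set.mem_iInter₂.mp (hγV j ⟨x, ⟨hjx, hxj.le⟩, rfl⟩) i (Set.Icc_subset_Icc ?_ ?_)
  · obtain ⟨k, hk⟩ := hS (htS i.castSucc)
    rw [← hk]
    exact s.monotone (Fin.le_castSucc_iff.mpr (s.lt_iff_lt.mp (hk ▸ hx.1.trans_lt hxj)))
  · obtain ⟨k, hk⟩ := hS (htS i.succ)
    rw [← hk]
    exact s.monotone (Fin.castSucc_lt_iff_succ_le.mp (s.lt_iff_lt.mp (hk ▸ hjx'.trans_le hx.2)))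

theorem trans {f₀ g₀ : Path a b} {f₁ g₁ : Path b c} (h₀ : HClose f₀ g₀) (h₁ : HClose f₁ g₁) :
    HClose (f₀.trans f₁) (g₀.trans g₁) := by
  intro n t ht0 ht1 _ U hU hgU
  obtain ⟨γ₀, hγ₀U, hγ₀g, hγ₀f⟩ := h₀.exists_of_partition (t := fun i => rescaleLeft (t i))
    (by simp [ht0]) (by simp [ht1])
    (U := fun i => if (t i.castSucc : ℝ) ≤ 1 / 2 then U i else Set.univ)
    (fun i => by split_ifs; exacts [hU i, isOpen_univ])
    (fun i => by
      split_ifs with hi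
      exacts [(g₀.image_Icc_rescaleLeft_subset g₁ hi).trans (hgU i), Set.subset_univ _])
  obtain ⟨γ₁, hγ₁U, hγ₁g, hγ₁f⟩ := h₁.exists_of_partition (t := fun i => rescaleRight (t i))
    (by simp [ht0]) (by simp [ht1])
    (U := fun i => if 1 / 2 ≤ (t i.succ : ℝ) then U i else Set.univ)
    (fun i => by split_ifs; exacts [hU i, isOpen_univ])
    (fun i => by
      split_ifs with hi
      exacts [(g₀.image_Icc_rescaleRight_subset g₁ hi).trans (hgU i), Set.subset_univ _])
  refine ⟨γ₀.trans γ₁, fun i => Path.trans_image_Icc_subset (fun hi => ?_) (fun hi => ?_),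
    fun i => ?_, hγ₀f.hcomp hγ₁f⟩
  · simpa only [hi, if_true] using hγ₀U i
  · simpa only [hi, if_true] using hγ₁U i
  · rcases le_total (t i : ℝ) (1 / 2) with hi | hi
    · rw [Path.trans_apply_of_le_half _ _ hi, Path.trans_apply_of_le_half _ _ hi, hγ₀g i]
    · rw [Path.trans_apply_of_half_le _ _ hi, Path.trans_apply_of_half_le _ _ hi, hγ₁g i]

theorem symm {f g : Path a b} (h : HClose f g) : HClose f.symm g.symm := by
  intro n t ht0 ht1 ht U hU hgU
  obtain ⟨γ, hγU, hγg, hγf⟩ := h n (fun i => σ (t i.rev)) (by simp [ht1]) (by simp [ht0])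
    (fun i j hij => symm_lt_symm.mpr (ht (Fin.rev_lt_rev.mpr hij)))
    (fun i => U i.rev) (fun i => hU i.rev)
    (fun i => by
      simpa only [Fin.rev_castSucc, Fin.rev_succ, Path.symm_image_Icc] using hgU i.rev)
  refine ⟨γ.symm, fun i => ?_, fun i => ?_, hγf.symm₂⟩
  · simpa only [Path.symm_image_Icc, Fin.rev_castSucc, Fin.rev_succ, Fin.rev_rev] using hγU i.rev
  · simpa using hγg i.rev

end HClose

/-- homotopical closeness is preserved by concatenation and reversal
of paths. -/
theorem stmt2 {a b c : X} (f₀ g₀ : Path a b) (f₁ g₁ : Path b c)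
    (h₀ : HClose f₀ g₀) (h₁ : HClose f₁ g₁) :
    HClose (f₀.trans f₁) (g₀.trans g₁) ∧ HClose f₀.symm g₀.symm :=
  ⟨h₀.trans h₁, h₀.symm⟩
end
end

section
/- Let X be a topological space, let x ∈ X, and let f, g be paths in X with f(0) = g(0) = x and f(1) = g(1). If f is homotopically close to g rel ∂I, then the class [f * g⁻¹] belongs to the Spanier group π₁^sp(X, x). -/
/-!
Fix an open cover `𝒰`. A Lebesgue number gives a partition `0 = t₀ < ⋯ < tₙ = 1` with each
`g [tᵢ₋₁, tᵢ]` inside some `Uᵢ ∈ 𝒰`, and closeness provides `γ ≃ f` that agrees with `g` at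
every `tᵢ` and has `γ [tᵢ₋₁, tᵢ] ⊆ Uᵢ`. Cutting `γ * g⁻¹` at the `tᵢ` writes it, up to homotopy,
as a product of conjugates of the loops `γ|[tᵢ₋₁, tᵢ] * (g|[tᵢ₋₁, tᵢ])⁻¹ ⊆ Uᵢ`, i.e. of
generators of `π(𝒰, x)`.
-/

open unitInterval

noncomputable section

attribute [local instance] Path.Homotopic.setoid

variable {X Y : Type*} [TopologicalSpace X] [TopologicalSpace Y]

lemma exists_strictMono_Icc_subset_open_cover_unitInterval {ι : Type*} {c : ι → Set I}
    (hc : ∀ i, IsOpen (c i)) (hcov : Set.univ ⊆ ⋃ i, c i) :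
    ∃ (n : ℕ) (t : Fin (n + 1) → I), t 0 = 0 ∧ t (Fin.last n) = 1 ∧ StrictMono t ∧
      ∀ i : Fin n, ∃ j, Set.Icc (t i.castSucc) (t i.succ) ⊆ c j := by
  obtain ⟨δ, hδ, hball⟩ := lebesgue_number_lemma_of_metric isCompact_univ hc hcov
  obtain ⟨n, hn⟩ := exists_nat_one_div_lt hδ
  have hn₀ : (0 : ℝ) < n + 1 := n.cast_add_one_pos
  let t : Fin (n + 2) → I := fun i =>
    ⟨i / (n + 1), div_mem i.val.cast_nonneg hn₀.le (by exact_mod_cast i.is_le)⟩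
  have ht : StrictMono t := fun i j hij => by
    show (i : ℝ) / (n + 1) < (j : ℝ) / (n + 1)
    gcongr
    exact_mod_cast hij
  refine ⟨n + 1, t, Subtype.ext ?_, Subtype.ext ?_, ht, fun i => ?_⟩
  · simp [t]
  · simp [t, hn₀.ne']
  · obtain ⟨j, hj⟩ := hball (t i.castSucc) trivial
    refine ⟨j, fun r hr => hj ?_⟩
    rw [Metric.mem_ball, Subtype.dist_eq]
    calc dist (r : ℝ) (t i.castSucc) ≤ t i.succ - t i.castSucc :=
          Real.dist_le_of_mem_Icc hr ⟨le_rfl, ht.monotone i.castSucc_le_succ⟩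
      _ = 1 / (n + 1) := by
          simp only [t, Fin.val_succ, Fin.val_castSucc, Nat.cast_add, Nat.cast_one]
          ring
      _ < δ := hn

lemma pathClass_eq_of_homotopic {x : X} {p q : Path x x} (h : p.Homotopic q) :
    pathClass p = pathClass q :=
  congrArg FundamentalGroup.fromPath (Quotient.sound h)

lemma pathClass_trans {x : X} (p q : Path x x) :
    pathClass (p.trans q) = pathClass q * pathClass p :=
  rfl

@[simp]
lemma Path.Homotopic.Quotient.symm_trans_cancel_left {x y z : X}
    (γ : Path.Homotopic.Quotient x y) (δ : Path.Homotopic.Quotient y z) :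
    γ.symm.trans (γ.trans δ) = δ := by
  rw [← trans_assoc, symm_trans, refl_trans]

/-- Quantifying over every conjugating path `u` (rather than fixing one) is what makes the
relation compatible with concatenation, see `SpanierRel.trans_trans`. -/
def SpanierRel (x : X) (𝒰 : Set (Set X)) {a b : X} (p q : Path a b) : Prop :=
  ∀ u : Path x a, pathClass ((u.trans (p.trans q.symm)).trans u.symm) ∈ spanierCover x 𝒰

namespace SpanierRel

variable {x a b c : X} {𝒰 : Set (Set X)}

lemma of_range_subset {p q : Path a b} {U : Set X} (hU : U ∈ 𝒰) (hp : Set.range p ⊆ U)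
    (hq : Set.range q ⊆ U) : SpanierRel x 𝒰 p q := fun u =>
  Subgroup.subset_closure ⟨a, u, p.trans q.symm, U, hU,
    by rw [Path.trans_range, Path.symm_range]; exact Set.union_subset hp hq, rfl⟩

lemma refl (p : Path a b) : SpanierRel x 𝒰 p p := fun u => by
  rw [pathClass_eq_of_homotopic (q := Path.refl x)]
  · exact one_mem _
  · refine Path.Homotopic.Quotient.eq.mp ?_
    simp

lemma trans_trans {p q : Path a b} {p' q' : Path b c} (h : SpanierRel x 𝒰 p q)
    (h' : SpanierRel x 𝒰 p' q') : SpanierRel x 𝒰 (p.trans p') (q.trans q') := fun u => by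
  have key : ((u.trans ((p.trans p').trans (q.trans q').symm)).trans u.symm).Homotopic
      ((((u.trans p).trans (p'.trans q'.symm)).trans (u.trans p).symm).trans
        ((u.trans (p.trans q.symm)).trans u.symm)) := by
    refine Path.Homotopic.Quotient.eq.mp ?_
    simp [Path.trans_symm]
  rw [pathClass_eq_of_homotopic key, pathClass_trans]
  exact mul_mem (h u) (h' _)

lemma congr {p p' q q' : Path a b} (h : SpanierRel x 𝒰 p q) (hp : p.Homotopic p')
    (hq : q.Homotopic q') : SpanierRel x 𝒰 p' q' := fun u => by
  rw [← pathClass_eq_of_homotopic (((Path.Homotopic.refl u).hcomp (hp.hcomp hq.symm₂)).hcomp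
    (Path.Homotopic.refl u.symm))]
  exact h u

lemma cast {a' b' : X} {p q : Path a b} (h : SpanierRel x 𝒰 p q) (ha : a' = a) (hb : b' = b) :
    SpanierRel x 𝒰 (p.cast ha hb) (q.cast ha hb) := by
  subst ha hb
  exact h

lemma pathClass_trans_symm_mem {p q : Path x a} (h : SpanierRel x 𝒰 p q) :
    pathClass (p.trans q.symm) ∈ spanierCover x 𝒰 := by
  rw [pathClass_eq_of_homotopic
    (q := ((Path.refl x).trans (p.trans q.symm)).trans (Path.refl x).symm)]
  · exact h _
  · refine Path.Homotopic.Quotient.eq.mp ?_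
    simp

lemma extend_subpath {γ g : Path a b} {r s s' : I} {hr : γ r = g r} {hs : γ s = g s}
    (h : SpanierRel x 𝒰 (γ.subpath r s) ((g.subpath r s).cast hr hs)) (hs' : γ s' = g s')
    (hss' : s ≤ s') {U : Set X} (hU : U ∈ 𝒰) (hγ : γ '' Set.Icc s s' ⊆ U)
    (hg : g '' Set.Icc s s' ⊆ U) :
    SpanierRel x 𝒰 (γ.subpath r s') ((g.subpath r s').cast hr hs') := by
  have segment : SpanierRel x 𝒰 (γ.subpath s s') ((g.subpath s s').cast hs hs') :=
    of_range_subset hU (by rwa [Path.range_subpath_of_le _ _ _ hss'])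
      (by rwa [Path.cast_coe, Path.range_subpath_of_le _ _ _ hss'])
  exact (h.trans_trans segment).congr ⟨Path.Homotopy.subpathTransSubpath γ r s s'⟩
    (Path.Homotopic.pathCast ⟨Path.Homotopy.subpathTransSubpath g r s s'⟩ hr hs')

lemma of_subpath_zero_one {γ g : Path a b} {s₀ s₁ : I} (h₀ : s₀ = 0) (h₁ : s₁ = 1)
    {hs₀ : γ s₀ = g s₀} {hs₁ : γ s₁ = g s₁}
    (h : SpanierRel x 𝒰 (γ.subpath s₀ s₁) ((g.subpath s₀ s₁).cast hs₀ hs₁)) :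
    SpanierRel x 𝒰 γ g := by
  subst h₀ h₁
  convert h.cast γ.source.symm γ.target.symm using 1 <;> ext <;> simp [Path.subpath]

lemma of_partition {γ g : Path a b} {n : ℕ} {t : Fin (n + 1) → I} (h₀ : t 0 = 0)
    (h₁ : t (Fin.last n) = 1) (ht : Monotone t) {U : Fin n → Set X} (hU : ∀ i, U i ∈ 𝒰)
    (hγ : ∀ i, γ '' Set.Icc (t i.castSucc) (t i.succ) ⊆ U i)
    (hg : ∀ i, g '' Set.Icc (t i.castSucc) (t i.succ) ⊆ U i) (hpt : ∀ i, γ (t i) = g (t i)) :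
    SpanierRel x 𝒰 γ g := by
  have prefix_rel : ∀ k, SpanierRel x 𝒰 (γ.subpath (t 0) (t k))
      ((g.subpath (t 0) (t k)).cast (hpt 0) (hpt k)) := by
    intro k
    induction k using Fin.induction with
    | zero =>
      convert refl (γ.subpath (t 0) (t 0)) using 1
      ext
      simp [Path.subpath, hpt]
    | succ i ih =>
      exact ih.extend_subpath (hpt _) (ht i.castSucc_le_succ) (hU i) (hγ i) (hg i)
  exact of_subpath_zero_one h₀ h₁ (prefix_rel (Fin.last n))

end SpanierRel

/-- if `f` is homotopically close to `g` rel `∂I`, then `[f * g⁻¹]`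
belongs to the Spanier group `π₁^sp(X, x)`. -/
theorem stmt3 {x z : X} (f g : Path x z) (h : HClose f g) :
    pathClass (f.trans g.symm) ∈ spanierGroup x := by
  simp only [spanierGroup, Subgroup.mem_iInf]
  intro 𝒰 h𝒰 hcover
  obtain ⟨n, t, h₀, h₁, ht, hsub⟩ := exists_strictMono_Icc_subset_open_cover_unitInterval
    (c := fun U : 𝒰 => g ⁻¹' U) (fun U => (h𝒰 U U.2).preimage g.continuous)
    (by rw [← Set.preimage_iUnion, ← Set.sUnion_eq_iUnion, hcover, Set.preimage_univ])
  choose U hgU using hsub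
  have hg : ∀ i, g '' Set.Icc (t i.castSucc) (t i.succ) ⊆ U i := fun i =>
    Set.image_subset_iff.2 (hgU i)
  obtain ⟨γ, hγ, hpt, hγf⟩ := h n t h₀ h₁ ht (fun i => U i) (fun i => h𝒰 _ (U i).2) hg
  rw [pathClass_eq_of_homotopic (hγf.symm.hcomp (.refl g.symm))]
  exact SpanierRel.pathClass_trans_symm_mem <|
    SpanierRel.of_partition h₀ h₁ ht.monotone (fun i => (U i).2) hγ hg hpt
end
end

section
/- Let X be a topological space, x ∈ X, and let f, g be paths in X with f(0) = g(0) = x and f(1) = g(1). If f is homotopically close to g rel ∂I, then [f * g⁻¹] belongs to the quasi-small loop group π₁^qs(X, x). -/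
open unitInterval

noncomputable section

attribute [local instance] Path.Homotopic.setoid

variable {X Y : Type*} [TopologicalSpace X] [TopologicalSpace Y]

/-!
On `[0, 1/2]` the path `g.trans k` is `g` run at double speed. So a partition of `I` with open
sets along `g.trans k` induces one along `g`: double the partition points below `1/2` and cap the
next one at `1`. A path `γ` that is homotopic to `f` and follows this data gives `γ.trans k`,
which follows the original data, since it agrees with `g.trans k` on `[1/2, 1]`. Taking
`k = g.symm`, the loop `g.trans g.symm` is null-homotopic.
-/

open Set

theorem Fin.exists_lt_iff_lt_of_monotone {α : Type*} [LinearOrder α] {N : ℕ} {t : Fin N → α}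
    (ht : Monotone t) (c : α) : ∃ m ≤ N, ∀ i, t i < c ↔ (i : ℕ) < m := by
  classical
  have hex : ∃ m : ℕ, ∀ i : Fin N, m ≤ i → c ≤ t i := ⟨N, fun i hi => absurd i.2 (by omega)⟩
  refine ⟨Nat.find hex, Nat.find_min' hex fun i hi => absurd i.2 (by omega), fun i => ⟨?_, ?_⟩⟩
  · intro hi
    by_contra hle
    exact (Nat.find_spec hex i (not_lt.1 hle)).not_gt hi
  · intro hi
    obtain ⟨j, hij, hj⟩ := by simpa using Nat.find_min hex hi
    exact (ht (Fin.le_def.2 hij)).trans_lt hj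

namespace Path

variable {x y z : X}

theorem image_Icc_subset_iff (γ : Path x y) {a b : I} {U : Set X} :
    γ '' Icc a b ⊆ U ↔ ∀ v ∈ Icc (a : ℝ) b, γ.extend v ∈ U := by
  refine ⟨fun h v hv => ?_, fun h => ?_⟩
  · have hvI : v ∈ I := ⟨a.2.1.trans hv.1, hv.2.trans b.2.2⟩
    rw [extend_apply γ hvI]
    exact h ⟨⟨v, hvI⟩, hv, rfl⟩
  · rintro _ ⟨v, hv, rfl⟩
    simpa only [extend_extends'] using h v hv

theorem extend_trans_congr_of_half_le (p q : Path x y) (k : Path y z) {v : ℝ} (hv : 1 / 2 ≤ v) :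
    (p.trans k).extend v = (q.trans k).extend v := by
  rw [extend_trans_of_half_le _ _ hv, extend_trans_of_half_le _ _ hv]

end Path

section FirstHalf

variable {n m : ℕ}

/-- For `m` the number of points of the partition `t` below `1/2`: the partition that `t` induces
on `[0, 1/2]`, rescaled to `I`. -/
def firstHalfRescale (t : Fin (n + 1) → I) (hmn : m ≤ n) (j : Fin (m + 1)) : I :=
  projIcc 0 1 zero_le_one (2 * (t (Fin.castLE (by omega) j) : ℝ))

theorem coe_firstHalfRescale (t : Fin (n + 1) → I) (hmn : m ≤ n) (j : Fin (m + 1)) :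
    (firstHalfRescale t hmn j : ℝ) = min (2 * (t (Fin.castLE (by omega) j) : ℝ)) 1 := by
  simp [firstHalfRescale, coe_projIcc, min_comm, (t _).2.1]

variable {t : Fin (n + 1) → I} (hmn : m ≤ n)

theorem coe_firstHalfRescale_of_lt (ht : ∀ i, (t i : ℝ) < 1 / 2 ↔ (i : ℕ) < m)
    {j : Fin (m + 1)} (hj : (j : ℕ) < m) :
    (firstHalfRescale t hmn j : ℝ) = 2 * t (Fin.castLE (by omega) j) := by
  have := (ht (Fin.castLE (by omega) j)).2 hj
  rw [coe_firstHalfRescale, min_eq_left (by linarith)]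

theorem coe_firstHalfRescale_castSucc (ht : ∀ i, (t i : ℝ) < 1 / 2 ↔ (i : ℕ) < m) (j : Fin m) :
    (firstHalfRescale t hmn j.castSucc : ℝ) = 2 * t (j.castLE hmn).castSucc :=
  coe_firstHalfRescale_of_lt hmn ht (by simp)

theorem coe_firstHalfRescale_succ (j : Fin m) :
    (firstHalfRescale t hmn j.succ : ℝ) = min (2 * (t (j.castLE hmn).succ : ℝ)) 1 :=
  coe_firstHalfRescale t hmn j.succ

theorem firstHalfRescale_zero (ht0 : t 0 = 0) : firstHalfRescale t hmn 0 = 0 := by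
  have h0 : Fin.castLE (by omega) (0 : Fin (m + 1)) = (0 : Fin (n + 1)) := rfl
  ext
  simp [coe_firstHalfRescale, h0, ht0]

theorem firstHalfRescale_last (ht : ∀ i, (t i : ℝ) < 1 / 2 ↔ (i : ℕ) < m) :
    firstHalfRescale t hmn (Fin.last m) = 1 := by
  have := (ht (Fin.castLE (by omega) (Fin.last m))).not.2 (by simp)
  ext
  rw [coe_firstHalfRescale, min_eq_right (by linarith), Set.Icc.coe_one]

theorem strictMono_firstHalfRescale (ht : ∀ i, (t i : ℝ) < 1 / 2 ↔ (i : ℕ) < m)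
    (htm : StrictMono t) : StrictMono (firstHalfRescale t hmn) := by
  refine Fin.strictMono_iff_lt_succ.2 fun j => ?_
  have hlt : t (Fin.castLE (by omega) j.castSucc) < t (Fin.castLE (by omega) j.succ) :=
    htm Fin.castSucc_lt_succ
  have hhalf := (ht (Fin.castLE (by omega) j.castSucc)).2 (by simp)
  rw [← Subtype.coe_lt_coe, coe_firstHalfRescale_of_lt hmn ht (by simp), coe_firstHalfRescale]
  exact lt_min (by linarith [Subtype.coe_lt_coe.2 hlt]) (by linarith)

end FirstHalf


theorem HClose.trans_right {x y z : X} {f g : Path x y} (h : HClose f g) (k : Path y z) :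
    HClose (f.trans k) (g.trans k) := by
  intro n t ht0 ht1 htm U hU hgU
  simp only [Path.image_Icc_subset_iff] at hgU ⊢
  obtain ⟨m, -, hm⟩ := Fin.exists_lt_iff_lt_of_monotone
    (t := fun i => (t i : ℝ)) (fun _ _ hij => htm.monotone hij) (1 / 2)
  have hmn : m ≤ n := by
    have := (hm (Fin.last n)).not.1 (by norm_num [ht1])
    simpa using this
  have hgU' (j : Fin m) : ∀ v ∈ Icc (firstHalfRescale t hmn j.castSucc : ℝ)
      (firstHalfRescale t hmn j.succ), g.extend v ∈ U (j.castLE hmn) := by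
    intro v ⟨hv₀, hv₁⟩
    rw [coe_firstHalfRescale_castSucc hmn hm] at hv₀
    rw [coe_firstHalfRescale_succ, le_min_iff] at hv₁
    have := hgU (j.castLE hmn) (v / 2) ⟨by linarith, by linarith⟩
    rwa [Path.extend_trans_of_le_half _ _ (by linarith), mul_div_cancel₀ _ two_ne_zero] at this
  obtain ⟨γ, hγU, hγs, hγf⟩ := h m (firstHalfRescale t hmn) (firstHalfRescale_zero hmn ht0)
    (firstHalfRescale_last hmn hm) (strictMono_firstHalfRescale hmn hm htm) _ (fun _ => hU _)
    (fun j => (Path.image_Icc_subset_iff g).2 (hgU' j))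
  refine ⟨γ.trans k, fun i v hv => ?_, fun i => ?_, hγf.hcomp (Path.Homotopic.refl k)⟩
  · rcases le_or_gt (1 / 2) v with hv₂ | hv₂
    · rw [Path.extend_trans_congr_of_half_le γ g k hv₂]
      exact hgU i v hv
    · obtain ⟨j, rfl⟩ : ∃ j : Fin m, j.castLE hmn = i :=
        ⟨⟨i, (hm i.castSucc).1 (hv.1.trans_lt hv₂)⟩, rfl⟩
      rw [Path.extend_trans_of_le_half _ _ hv₂.le]
      refine (Path.image_Icc_subset_iff γ).1 (hγU j) (2 * v) ⟨?_, ?_⟩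
      · rw [coe_firstHalfRescale_castSucc hmn hm]
        linarith [hv.1]
      · rw [coe_firstHalfRescale_succ]
        exact le_min (by linarith [hv.2]) (by linarith)
  · rw [← Path.extend_extends', ← Path.extend_extends']
    rcases le_or_gt (1 / 2 : ℝ) (t i) with hi | hi
    · exact Path.extend_trans_congr_of_half_le γ g k hi
    · have him : (i : ℕ) < m + 1 := by have := (hm i).1 hi; omega
      have := hγs ⟨i, him⟩
      rw [← Path.extend_extends', ← Path.extend_extends',
        coe_firstHalfRescale_of_lt hmn hm ((hm i).1 hi)] at this
      rwa [Path.extend_trans_of_le_half _ _ hi.le, Path.extend_trans_of_le_half _ _ hi.le]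

theorem pathClass_trans_symm {x y : X} (g : Path x y) : pathClass (g.trans g.symm) = 1 :=
  congrArg FundamentalGroup.fromPath (Quotient.sound (Path.Homotopic.trans_symm g))

/-- if `f` is homotopically close to `g` rel `∂I`, then `[f * g⁻¹]`
belongs to the quasi-small loop group `π₁^qs(X, x)`. -/
theorem stmt6 {x z : X} (f g : Path x z) (h : HClose f g) :
    pathClass (f.trans g.symm) ∈ qs x :=
  ⟨f.trans g.symm, g.trans g.symm, rfl, Subgroup.mem_bot.2 (pathClass_trans_symm g),
    h.trans_right g.symm⟩
end
end

section
/- Let X be a topological space, x ∈ X, let H be a subset of π₁(X, x), and let K be a subgroup of π₁(X, x) containing the quasi-small loop group π₁^qs(X, x). Then H ⊆ K if and only if π_H^qs(X, x) ⊆ K. In particular, π_K^qs(X, x) = K. -/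
open unitInterval

noncomputable section

attribute [local instance] Path.Homotopic.setoid

variable {X Y : Type*} [TopologicalSpace X] [TopologicalSpace Y]

/-!
If `f` is homotopically close to `h`, then `f · h⁻¹` is homotopically close to the null-homotopic
loop `h · h⁻¹`, so `[f] = [h] · [f · h⁻¹]` lies in `[h] · π₁^qs(X, x)`. The only real work is that
homotopic closeness survives concatenation on the right: a partition of `I` adapted to `h · p`
is cut at the first node `≥ 1/2`, and the part before it, rescaled by doubling, is a partition
adapted to `h`.
-/

theorem Fin.exists_castSucc_lt_and_le {α : Type*} [LinearOrder α] {n : ℕ} (f : Fin (n + 1) → α)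
    {c : α} (h0 : f 0 < c) (hn : c ≤ f (Fin.last n)) :
    ∃ i : Fin n, f i.castSucc < c ∧ c ≤ f i.succ := by
  by_contra! H
  exact (Fin.induction (motive := fun i => f i < c) h0 H (Fin.last n)).not_ge hn

namespace unitInterval

/-- On `[0, 1/2]`, `γ.trans γ'` runs through `γ ∘ double`. -/
def double (w : I) : I := Set.projIcc 0 1 zero_le_one (2 * w)

lemma coe_double_of_le_half {w : I} (hw : (w : ℝ) ≤ 1 / 2) : (double w : ℝ) = 2 * w :=
  congrArg Subtype.val (Set.projIcc_of_mem _ ⟨by linarith [w.2.1], by linarith⟩)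

lemma coe_double_le (w : I) : (double w : ℝ) ≤ 2 * w := by
  simp only [double, Set.coe_projIcc]
  exact max_le (by linarith [w.2.1]) (min_le_right _ _)

lemma double_of_half_le {w : I} (hw : 1 / 2 ≤ (w : ℝ)) : double w = 1 :=
  Set.projIcc_of_right_le _ (by linarith)

lemma double_zero : double 0 = 0 :=
  Subtype.ext <| by rw [coe_double_of_le_half (by norm_num)]; simp

lemma monotone_double : Monotone double := fun _ _ h =>
  Set.monotone_projIcc _ (mul_le_mul_of_nonneg_left (Subtype.coe_le_coe.mpr h) zero_le_two)

lemma double_lt_double {v w : I} (hvw : v < w) (hv : (v : ℝ) < 1 / 2) : double v < double w := by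
  rw [← Subtype.coe_lt_coe, coe_double_of_le_half hv.le]
  simp only [double, Set.coe_projIcc]
  exact lt_max_of_lt_right (lt_min (by linarith) (by linarith [Subtype.coe_lt_coe.mpr hvw]))

end unitInterval

namespace Path

variable {a b c : X}

lemma trans_apply_of_le_half_s8 (γ : Path a b) (γ' : Path b c) {w : I} (hw : (w : ℝ) ≤ 1 / 2) :
    γ.trans γ' w = γ (double w) :=
  if_pos hw

lemma trans_apply_eq_of_half_le (γ δ : Path a b) (γ' : Path b c) {w : I}
    (hw : 1 / 2 ≤ (w : ℝ)) : γ.trans γ' w = δ.trans γ' w := by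
  rcases hw.eq_or_lt with hw | hw
  · rw [trans_apply_of_le_half_s8 _ _ hw.ge, trans_apply_of_le_half_s8 _ _ hw.ge,
      double_of_half_le hw.le, γ.target, δ.target]
  · rw [trans_apply, trans_apply, dif_neg hw.not_ge, dif_neg hw.not_ge]

lemma image_Icc_double_subset (γ : Path a b) (γ' : Path b c) {v w : I} (hv : (v : ℝ) ≤ 1 / 2) :
    γ '' Set.Icc (double v) (double w) ⊆ γ.trans γ' '' Set.Icc v w := by
  rintro _ ⟨u, ⟨hvu, huw⟩, rfl⟩
  have hvu : 2 * (v : ℝ) ≤ u := coe_double_of_le_half hv ▸ Subtype.coe_le_coe.mpr hvu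
  have huw : (u : ℝ) ≤ 2 * w := (Subtype.coe_le_coe.mpr huw).trans (coe_double_le w)
  have hu : (u : ℝ) / 2 ≤ 1 / 2 := by linarith [u.2.2]
  refine ⟨⟨u / 2, by constructor <;> linarith [u.2.1, u.2.2]⟩, ⟨?_, ?_⟩, ?_⟩
  · exact Subtype.coe_le_coe.mp (by dsimp only; linarith)
  · exact Subtype.coe_le_coe.mp (by dsimp only; linarith)
  · rw [trans_apply_of_le_half_s8 _ _ hu]
    congr 1
    exact Subtype.ext <| (coe_double_of_le_half hu).trans (by ring)

end Path

lemma StrictMono.double_comp {m : ℕ} {s : Fin (m + 1) → I} (hs : StrictMono s)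
    (hlt : ∀ j : Fin m, (s j.castSucc : ℝ) < 1 / 2) : StrictMono (double ∘ s) := by
  intro i j hij
  have hi : i ≠ Fin.last m := (hij.trans_le (Fin.le_last j)).ne
  exact double_lt_double (hs hij) (Fin.castSucc_castPred i hi ▸ hlt (i.castPred hi))

lemma HClose.refl {a b : X} (f : Path a b) : HClose f f :=
  fun _ _ _ _ _ _ _ hcov => ⟨f, hcov, fun _ => rfl, Path.Homotopic.refl f⟩

lemma HClose.trans_right_s8 {a b c : X} {f h : Path a b} (hfh : HClose f h) (p : Path b c) :
    HClose (f.trans p) (h.trans p) := by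
  intro n t ht0 htn ht U hU hcov
  obtain ⟨k, hk, hk'⟩ := Fin.exists_castSucc_lt_and_le (fun i => (t i : ℝ)) (c := 1 / 2)
    (by norm_num [ht0]) (by norm_num [htn])
  have hkn : (k : ℕ) + 1 ≤ n := k.isLt
  let ι : Fin ((k : ℕ) + 1 + 1) → Fin (n + 1) := Fin.castLE (by omega)
  have hle_k : ∀ i : Fin (n + 1), (t i : ℝ) < 1 / 2 → (i : ℕ) ≤ k := fun i hi =>
    Nat.lt_succ_iff.mp (ht.lt_iff_lt.mp (Subtype.coe_lt_coe.mp (hi.trans_le hk')))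
  have hι : ∀ j : Fin ((k : ℕ) + 1), (t (ι j.castSucc) : ℝ) < 1 / 2 := fun j =>
    (Subtype.coe_le_coe.mpr (ht.monotone (Fin.le_def.mpr (by simp [ι]; omega)))).trans_lt hk
  -- the nodes `t₀ < ⋯ < t_{k+1}`, doubled, form a partition adapted to `h` (ending at `1`)
  obtain ⟨γ, hγU, hγt, hγf⟩ := hfh ((k : ℕ) + 1) (double ∘ t ∘ ι)
    (by simp [ι, ht0, double_zero]) (double_of_half_le hk')
    ((ht.comp (Fin.strictMono_castLE _)).double_comp hι)
    (fun j => U (Fin.castLE hkn j)) (fun _ => hU _)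
    (fun j => (h.image_Icc_double_subset p (hι j).le).trans (hcov (Fin.castLE hkn j)))
  refine ⟨γ.trans p, fun i => ?_, fun i => ?_, hγf.hcomp (.refl p)⟩
  · rintro _ ⟨w, hw, rfl⟩
    rcases lt_or_ge (w : ℝ) (1 / 2) with hw' | hw'
    · have hi : (i : ℕ) ≤ k := hle_k i.castSucc ((Subtype.coe_le_coe.mpr hw.1).trans_lt hw')
      rw [Path.trans_apply_of_le_half_s8 _ _ hw'.le]
      exact hγU ⟨i, by omega⟩ ⟨double w, ⟨monotone_double hw.1, monotone_double hw.2⟩, rfl⟩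
    · rw [Path.trans_apply_eq_of_half_le γ h p hw']
      exact hcov i ⟨w, hw, rfl⟩
  · rcases lt_or_ge (t i : ℝ) (1 / 2) with hi | hi
    · rw [Path.trans_apply_of_le_half_s8 _ _ hi.le, Path.trans_apply_of_le_half_s8 _ _ hi.le]
      exact hγt ⟨i, by have := hle_k i hi; omega⟩
    · exact Path.trans_apply_eq_of_half_le γ h p hi

section FundamentalGroup

variable {x : X}

lemma pathClass_trans_s8 (f g : Path x x) : pathClass (f.trans g) = pathClass g * pathClass f :=
  Path.Homotopic.Quotient.mk_trans f g

lemma pathClass_trans_symm_s8 (f : Path x x) : pathClass (f.trans f.symm) = 1 :=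
  Quotient.sound ⟨(Path.Homotopy.reflTransSymm f).symm⟩

lemma pathClass_symm (f : Path x x) : pathClass f.symm = (pathClass f)⁻¹ :=
  eq_inv_of_mul_eq_one_left (pathClass_trans_s8 f f.symm ▸ pathClass_trans_symm_s8 f)

lemma pathClass_surjective : Function.Surjective (pathClass (x := x)) :=
  fun p => Quotient.exists_rep (FundamentalGroup.toPath p)

lemma pathClass_eq_mul_pathClass_trans_symm (f h : Path x x) :
    pathClass f = pathClass h * pathClass (f.trans h.symm) := by
  rw [pathClass_trans_s8, pathClass_symm, mul_inv_cancel_left]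

lemma subset_qsSet (H : Set (FundamentalGroup X x)) : H ⊆ qsSet x H := fun p hp =>
  let ⟨f, hf⟩ := pathClass_surjective p
  ⟨f, f, hf, hf ▸ hp, HClose.refl f⟩

lemma HClose.pathClass_trans_symm_mem_qs {f h : Path x x} (hfh : HClose f h) :
    pathClass (f.trans h.symm) ∈ qs x :=
  ⟨_, _, rfl, Subgroup.mem_bot.mpr (pathClass_trans_symm_s8 h), hfh.trans_right_s8 h.symm⟩

lemma qsSet_subset {H : Set (FundamentalGroup X x)} {K : Subgroup (FundamentalGroup X x)}
    (hK : qs x ⊆ K) (hH : H ⊆ K) : qsSet x H ⊆ K := by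
  rintro _ ⟨f, h, rfl, hh, hfh⟩
  rw [pathClass_eq_mul_pathClass_trans_symm f h]
  exact K.mul_mem (hH hh) (hK hfh.pathClass_trans_symm_mem_qs)

end FundamentalGroup

/-- for a subset `H` and a subgroup `K ⊇ π₁^qs(X, x)` of `π₁(X, x)`,
one has `H ⊆ K ↔ π_H^qs(X, x) ⊆ K`; in particular `π_K^qs(X, x) = K`. -/
theorem stmt8 (x : X) (H : Set (FundamentalGroup X x)) (K : Subgroup (FundamentalGroup X x))
    (hK : qs x ⊆ (K : Set (FundamentalGroup X x))) :
    (H ⊆ (K : Set (FundamentalGroup X x)) ↔ qsSet x H ⊆ (K : Set (FundamentalGroup X x))) ∧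
    qsSet x ↑K = (K : Set (FundamentalGroup X x)) := by
  exact ⟨⟨qsSet_subset hK, (subset_qsSet H).trans⟩,
    (qsSet_subset hK le_rfl).antisymm (subset_qsSet _)⟩
end
end

section
/- Let φ : (X, x) → (Y, y) be a continuous map of pointed topological spaces and let H be a subset of π₁(X, x). Then the induced homomorphism φ_* : π₁(X, x) → π₁(Y, y), φ_*([f]) = [φ∘f], maps π_H^qs(X, x) into π_{φ_*(H)}^qs(Y, y). -/
open unitInterval

noncomputable section

attribute [local instance] Path.Homotopic.setoid

variable {X Y : Type*} [TopologicalSpace X] [TopologicalSpace Y]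

lemma pathClass_eq_pathClass_iff {x : X} {f g : Path x x} :
    pathClass f = pathClass g ↔ f.Homotopic g :=
  Quotient.eq (r := Path.Homotopic.setoid x x)

lemma pathClass_map_eq_of_pathClass_eq {φ : X → Y} (hφ : Continuous φ) {x : X}
    {f g : Path x x} (h : pathClass f = pathClass g) :
    pathClass (f.map hφ) = pathClass (g.map hφ) :=
  pathClass_eq_pathClass_iff.mpr ((pathClass_eq_pathClass_iff.mp h).map ⟨φ, hφ⟩)

lemma HClose.map {φ : X → Y} (hφ : Continuous φ) {a b : X} {f g : Path a b}
    (hfg : HClose f g) : HClose (f.map hφ) (g.map hφ) := by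
  intro n t ht0 ht1 ht_mono U hU_open hg_sub
  obtain ⟨γ, hγ_sub, hγ_eq, hγ_homotopic⟩ :=
    hfg n t ht0 ht1 ht_mono (fun i => φ ⁻¹' U i) (fun i => (hU_open i).preimage hφ)
      (fun i => Set.image_subset_iff.mp (by simpa [Set.image_image] using hg_sub i))
  refine ⟨γ.map hφ, fun i => ?_, fun i => ?_, hγ_homotopic.map ⟨φ, hφ⟩⟩
  · simpa [Set.image_image] using Set.image_subset_iff.mpr (hγ_sub i)
  · simp [hγ_eq i]

/-- a continuous map `φ : (X, x) → (Y, φ x)` sends `π_H^qs(X, x)` into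
`π_{φ_*(H)}^qs(Y, φ x)`. -/
theorem stmt11 {φ : X → Y} (hφ : Continuous φ) (x : X) (H : Set (FundamentalGroup X x)) :
    ∀ f : Path x x, pathClass f ∈ qsSet x H →
      pathClass (f.map hφ) ∈
        qsSet (φ x) { q | ∃ h : Path x x, pathClass h ∈ H ∧ q = pathClass (h.map hφ) } := by
  rintro f ⟨f', h, hf'f, hh, hf'h⟩
  exact ⟨f'.map hφ, h.map hφ, pathClass_map_eq_of_pathClass_eq hφ hf'f, ⟨h, hh, rfl⟩,
    hf'h.map hφ⟩
end
end
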